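/- Consider the subspace X' = ℝ × {0,1} of ℝ² with the Euclidean metric ρ₂. Then ρ₂ is sleek for X' (the interior in X' of every closed ball equals the corresponding open ball), but ρ₂ is not round for X' (there exists a point a×b in X' such that the point a×(1-b) lies in the closed ball B[a×b, 1] ∩ X' but not in the closure in X' of the open ball B(a×b, 1) ∩ X'). -/
import Mathlib


/-- A metric space is *round* if the closure of every open ball equals the
corresponding closed ball. -/
def IsRound (X : Type*) [MetricSpace X] : Prop :=
  ∀ (x : X) (r : ℝ), 0 < r → closure (Metric.ball x r) = Metric.closedBall x r

/-- A metric space is *sleek* if the interior of every closed ball equals the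
corresponding open ball. -/
def IsSleek (X : Type*) [MetricSpace X] : Prop :=
  ∀ (x : X) (r : ℝ), 0 < r → interior (Metric.closedBall x r) = Metric.ball x r

/-- The point `a × b` of the Euclidean plane. -/
noncomputable def pt (a b : ℝ) : EuclideanSpace ℝ (Fin 2) := (WithLp.equiv 2 (Fin 2 → ℝ)).symm ![a, b]

/-- The subspace `X'` of the Euclidean plane. -/
def X' : Set (EuclideanSpace ℝ (Fin 2)) := {p | p 1 = 0 ∨ p 1 = 1}

lemma pt0 (a b : ℝ) : pt a b 0 = a := rfl
lemma pt1 (a b : ℝ) : pt a b 1 = b := rfl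

lemma dist_eq' (p q : EuclideanSpace ℝ (Fin 2)) :
    dist p q = Real.sqrt ((p 0 - q 0) ^ 2 + (p 1 - q 1) ^ 2) := by
  rw [EuclideanSpace.dist_eq]
  simp [Fin.sum_univ_two, Real.dist_eq, sq_abs]

lemma abs_sub_le_dist' (p q : EuclideanSpace ℝ (Fin 2)) :
    |p 1 - q 1| ≤ dist p q := by
  rw [dist_eq']
  calc |p 1 - q 1| = Real.sqrt ((p 1 - q 1) ^ 2) := (Real.sqrt_sq_eq_abs _).symm
    _ ≤ _ := Real.sqrt_le_sqrt (by nlinarith [sq_nonneg (p 0 - q 0)])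

/-- The subspace `X' = ℝ × {0,1}` of the Euclidean plane is sleek but not round:
there is a point `a × b ∈ X'` such that the point `a × (1-b)` lies in the closed ball
`B[a×b, 1]` of `X'` but not in the closure in `X'` of the open ball `B(a×b, 1)`. -/
theorem sleek_not_round_example :
    IsSleek ↥X' ∧
    ∃ (a b : ℝ) (hp : pt a b ∈ X') (hq : pt a (1 - b) ∈ X'),
      (⟨pt a (1 - b), hq⟩ : ↥X') ∈ Metric.closedBall (⟨pt a b, hp⟩ : ↥X') 1 ∧
      (⟨pt a (1 - b), hq⟩ : ↥X') ∉ closure (Metric.ball (⟨pt a b, hp⟩ : ↥X') 1) := by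
  constructor
  · intro x r hr
    refine Set.Subset.antisymm ?_ Metric.ball_subset_interior_closedBall
    intro p hp
    rw [mem_interior_iff_mem_nhds, Metric.mem_nhds_iff] at hp
    obtain ⟨ε, hε, hball⟩ := hp
    set s : ℝ := if x.1 0 ≤ p.1 0 then 1 else -1 with hs
    have hs2 : s ^ 2 = 1 := by
      rcases le_or_gt (x.1 0) (p.1 0) with h | h <;> simp [hs, h, not_le.mpr]
    have hq' : pt (p.1 0 + s * (ε / 2)) (p.1 1) ∈ X' := by
      rcases p.2 with h | h
      · exact Or.inl (by simpa [pt1] using h)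
      · exact Or.inr (by simpa [pt1] using h)
    set q : ↥X' := ⟨_, hq'⟩ with hqdef
    have hqp : dist q p = ε / 2 := by
      rw [Subtype.dist_eq, dist_eq']
      simp only [hqdef, pt0, pt1, add_sub_cancel_left, sub_self]
      rw [mul_pow, hs2, one_mul]
      norm_num
      rw [Real.sqrt_sq (by positivity)]
    have hqmem : q ∈ Metric.closedBall x r := by
      apply hball
      rw [Metric.mem_ball, hqp]
      linarith
    rw [Metric.mem_closedBall] at hqmem
    rw [Metric.mem_ball]
    have hlt : dist p x < dist q x := by
      rw [Subtype.dist_eq, Subtype.dist_eq, dist_eq', dist_eq']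
      simp only [hqdef, pt0, pt1]
      apply Real.sqrt_lt_sqrt (by positivity)
      have : (p.1 0 - x.1 0) ^ 2 < (p.1 0 + s * (ε / 2) - x.1 0) ^ 2 := by
        rcases le_or_gt (x.1 0) (p.1 0) with h | h
        · have hs1 : s = 1 := by simp [hs, h]
          rw [hs1]; nlinarith
        · have hs1 : s = -1 := by simp [hs, not_le.mpr h]
          rw [hs1]; nlinarith
      linarith
    linarith
  · refine ⟨0, 0, Or.inl rfl, Or.inr (by norm_num [pt1]), ?_, ?_⟩
    · rw [Metric.mem_closedBall, Subtype.dist_eq, dist_eq']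
      simp only [pt0, pt1]
      norm_num
    · intro hc
      rw [Metric.mem_closure_iff] at hc
      obtain ⟨y, hy, hdy⟩ := hc (1 / 2) (by norm_num)
      have h0 : y.1 1 = 0 := by
        rcases y.2 with h | h
        · exact h
        · exfalso
          have hy' : dist y.1 (pt 0 0) < 1 := hy
          have := abs_sub_le_dist' y.1 (pt 0 0)
          rw [pt1, h] at this
          simp at this
          linarith
      have hdy' : dist (pt 0 (1 - 0)) y.1 < 1 / 2 := hdy
      have := abs_sub_le_dist' (pt 0 (1 - 0)) y.1
      rw [pt1, h0] at this
      norm_num at this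
      linarith
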